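/- arXiv:1502.02298 — 2 statements merged into one kernel-verified Lean document; each statement's English description precedes it below -/
import Mathlib

section
/- If a revision operator ∘ on sets of sentences satisfies postulates (G1), (G2), (G3), (G5), and (G6), then it also satisfies postulate (G4): if Cn(T'₁) = Cn(T'₂) then Mod(T ∘ T'₁) = Mod(T ∘ T'₂). -/
open Set

variable {Sen ModT : Type*}

/-- Models of a set of sentences. -/
def ModS (sat : ModT → Sen → Prop) (T : Set Sen) : Set ModT := {M | ∀ φ ∈ T, sat M φ}

/-- Sentences satisfied by every model of a class. -/
def starS (sat : ModT → Sen → Prop) (Ms : Set ModT) : Set Sen := {φ | ∀ M ∈ Ms, sat M φ}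

/-- Semantic consequences. -/
def Cn (sat : ModT → Sen → Prop) (T : Set Sen) : Set Sen := starS sat (ModS sat T)

/-- Trivial models: those satisfying every sentence. -/
def Triv (sat : ModT → Sen → Prop) : Set ModT := {M | ∀ φ, sat M φ}

/-- Consistency: Cn(T) ≠ Sen. -/
def Consistent (sat : ModT → Sen → Prop) (T : Set Sen) : Prop := Cn sat T ≠ Set.univ

/-- Strict part of a binary relation. -/
def precRel (r : ModT → ModT → Prop) (M M' : ModT) : Prop := r M M' ∧ ¬ r M' M

/-- Minimal elements of a class of models w.r.t. a relation. -/
def MinSet (Ms : Set ModT) (r : ModT → ModT → Prop) : Set ModT :=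
  {M ∈ Ms | ∀ M' ∈ Ms, ¬ precRel r M' M}

/-- Faithful assignment. -/
def Faithful (sat : ModT → Sen → Prop) (f : Set Sen → ModT → ModT → Prop) : Prop :=
  (∀ T M M', M ∈ ModS sat T → M' ∈ ModS sat T → ¬ precRel (f T) M M') ∧
  (∀ T M M', M ∈ ModS sat T → M' ∉ ModS sat T → precRel (f T) M M')

/-- The AGM postulates (G1)-(G6) for a revision operator. -/
def AGM (sat : ModT → Sen → Prop) (rev : Set Sen → Set Sen → Set Sen) : Prop :=
  (∀ T T', Consistent sat T' → Consistent sat (rev T T')) ∧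
  (∀ T T', ModS sat (rev T T') ⊆ ModS sat T') ∧
  (∀ T T', Consistent sat (T ∪ T') → rev T T' = T ∪ T') ∧
  (∀ T T₁ T₂, Cn sat T₁ = Cn sat T₂ → ModS sat (rev T T₁) = ModS sat (rev T T₂)) ∧
  (∀ T T' T'', ModS sat (rev T T' ∪ T'') ⊆ ModS sat (rev T (T' ∪ T''))) ∧
  (∀ T T' T'', Consistent sat (rev T T' ∪ T'') →
    ModS sat (rev T (T' ∪ T'')) ⊆ ModS sat (rev T T' ∪ T''))

/-- FA+ : a faithful assignment satisfying the three minimality conditions. -/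
def FAplus (sat : ModT → Sen → Prop) (rev : Set Sen → Set Sen → Set Sen)
    (f : Set Sen → ModT → ModT → Prop) : Prop :=
  Faithful sat f ∧
  ∀ T T' : Set Sen,
    (ModS sat (rev T T') \ Triv sat = MinSet (ModS sat T' \ Triv sat) (f T)) ∧
    (Consistent sat T' → (MinSet (ModS sat T' \ Triv sat) (f T)).Nonempty) ∧
    (∀ T'' : Set Sen, Consistent sat (rev T T' ∪ T'') →
      MinSet (ModS sat T' \ Triv sat) (f T) ∩ ModS sat T'' =
        MinSet (ModS sat (T' ∪ T'') \ Triv sat) (f T))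

/-- {M,M'}^*, the set of sentences satisfied by both M and M'. -/
def pairStar (sat : ModT → Sen → Prop) (M M' : ModT) : Set Sen := {φ | sat M φ ∧ sat M' φ}


lemma modS_cn (sat : ModT → Sen → Prop) (T : Set Sen) :
    ModS sat (Cn sat T) = ModS sat T := by
  ext M
  constructor
  · intro h φ hφ
    exact h φ (fun M' hM' => hM' φ hφ)
  · intro h φ hφ
    exact hφ M h

lemma modS_union (sat : ModT → Sen → Prop) (A B : Set Sen) :
    ModS sat (A ∪ B) = ModS sat A ∩ ModS sat B := by
  ext M
  constructor
  · intro h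
    exact ⟨fun φ hφ => h φ (Or.inl hφ), fun φ hφ => h φ (Or.inr hφ)⟩
  · rintro ⟨h1, h2⟩ φ (hφ | hφ)
    · exact h1 φ hφ
    · exact h2 φ hφ

lemma consistent_iff (sat : ModT → Sen → Prop) (T : Set Sen) :
    Consistent sat T ↔ ∃ M ∈ ModS sat T, M ∉ Triv sat := by
  unfold Consistent Cn starS Triv
  constructor
  · intro h
    by_contra hc
    push_neg at hc
    apply h
    ext φ
    simp only [Set.mem_univ, iff_true, Set.mem_setOf_eq]
    intro M hM
    exact hc M hM φ
  · rintro ⟨M, hM, hMt⟩ h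
    apply hMt
    intro φ
    have : φ ∈ (Set.univ : Set Sen) := Set.mem_univ φ
    rw [← h] at this
    exact this M hM

lemma triv_subset (sat : ModT → Sen → Prop) (T : Set Sen) :
    Triv sat ⊆ ModS sat T := fun M hM φ _ => hM φ

theorem G4_of_other_postulates (sat : ModT → Sen → Prop)
    (rev : Set Sen → Set Sen → Set Sen)
    (hG1 : ∀ T T', Consistent sat T' → Consistent sat (rev T T'))
    (hG2 : ∀ T T', ModS sat (rev T T') ⊆ ModS sat T')
    (hG3 : ∀ T T', Consistent sat (T ∪ T') → rev T T' = T ∪ T')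
    (hG5 : ∀ T T' T'', ModS sat (rev T T' ∪ T'') ⊆ ModS sat (rev T (T' ∪ T'')))
    (hG6 : ∀ T T' T'', Consistent sat (rev T T' ∪ T'') →
      ModS sat (rev T (T' ∪ T'')) ⊆ ModS sat (rev T T' ∪ T'')) :
    ∀ T T₁ T₂ : Set Sen, Cn sat T₁ = Cn sat T₂ →
      ModS sat (rev T T₁) = ModS sat (rev T T₂) := by
  intro T T₁ T₂ hCn
  have hmod : ModS sat T₁ = ModS sat T₂ := by
    rw [← modS_cn sat T₁, ← modS_cn sat T₂, hCn]
  by_cases hc : Consistent sat T₁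
  · -- consistent case
    have key : ∀ A B : Set Sen, ModS sat A = ModS sat B → Consistent sat A →
        ModS sat (rev T A) = ModS sat (rev T (A ∪ B)) := by
      intro A B hAB hA
      have hu : ModS sat (rev T A ∪ B) = ModS sat (rev T A) := by
        rw [modS_union]
        apply Set.inter_eq_self_of_subset_left
        calc ModS sat (rev T A) ⊆ ModS sat A := hG2 T A
          _ = ModS sat B := hAB
      have hconsA : Consistent sat (rev T A) := hG1 T A hA
      have hcons : Consistent sat (rev T A ∪ B) := by
        rw [consistent_iff] at hconsA ⊢
        obtain ⟨M, hM, hMt⟩ := hconsA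
        exact ⟨M, hu ▸ hM, hMt⟩
      apply Set.Subset.antisymm
      · calc ModS sat (rev T A) = ModS sat (rev T A ∪ B) := hu.symm
          _ ⊆ ModS sat (rev T (A ∪ B)) := hG5 T A B
      · calc ModS sat (rev T (A ∪ B)) ⊆ ModS sat (rev T A ∪ B) := hG6 T A B hcons
          _ = ModS sat (rev T A) := hu
    have hc₂ : Consistent sat T₂ := by
      rw [consistent_iff] at hc ⊢
      rw [← hmod]; exact hc
    have h1 := key T₁ T₂ hmod hc
    have h2 := key T₂ T₁ hmod.symm hc₂
    rw [h1, h2, Set.union_comm]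
  · -- inconsistent: all models are trivial
    have hc₂ : ¬ Consistent sat T₂ := by
      rw [consistent_iff] at hc ⊢
      rw [← hmod]; exact hc
    have htriv : ∀ S : Set Sen, ¬ Consistent sat S → ModS sat S ⊆ Triv sat := by
      intro S hS
      by_contra h
      apply hS
      rw [consistent_iff]
      rw [Set.not_subset] at h
      obtain ⟨M, hM, hMt⟩ := h
      exact ⟨M, hM, hMt⟩
    have h1 : ModS sat (rev T T₁) = Triv sat :=
      Set.Subset.antisymm ((hG2 T T₁).trans (htriv T₁ hc)) (triv_subset sat _)
    have h2 : ModS sat (rev T T₂) = Triv sat :=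
      Set.Subset.antisymm ((hG2 T T₂).trans (htriv T₂ hc₂)) (triv_subset sat _)
    rw [h1, h2]
end

section
/- Let ∘ be a revision operator satisfying the AGM postulates (G1)–(G6). For each knowledge base T define a binary relation ≼_T on models by: M ≼_T M' iff either M ∈ Mod(T), or M ∈ Mod(T ∘ {M,M'}*) and M' ∉ Triv. Then the assignment T ↦ ≼_T is faithful: (1) if M, M' ∈ Mod(T) then not M ≺_T M'; (2) if M ∈ Mod(T) and M' ∉ Mod(T) then M ≺_T M'. -/
open Set

variable {Sen ModT : Type*}

theorem faithful_of_AGM (sat : ModT → Sen → Prop) (rev : Set Sen → Set Sen → Set Sen)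
    (hAGM : AGM sat rev) :
    Faithful sat (fun T M M' =>
      M ∈ ModS sat T ∨ (M ∈ ModS sat (rev T (pairStar sat M M')) ∧ M' ∉ Triv sat)) := by
  constructor
  · rintro T M M' hM hM' ⟨_, h2⟩
    exact h2 (Or.inl hM')
  · intro T M M' hM hM'
    refine ⟨Or.inl hM, ?_⟩
    rintro (h | ⟨hrev, hMnt⟩)
    · exact hM' h
    · obtain ⟨φ, hφ⟩ : ∃ φ, ¬ sat M φ := by
        by_contra h; push_neg at h; exact hMnt h
      have hMmem : M ∈ ModS sat (T ∪ pairStar sat M' M) := by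
        intro ψ hψ
        rcases hψ with hψ | hψ
        · exact hM ψ hψ
        · exact hψ.2
      have hcons : Consistent sat (T ∪ pairStar sat M' M) := by
        intro heq
        have : φ ∈ Cn sat (T ∪ pairStar sat M' M) := by rw [heq]; trivial
        exact hφ (this M hMmem)
      have hG3 := hAGM.2.2.1 T (pairStar sat M' M) hcons
      rw [hG3] at hrev
      exact hM' (fun ψ hψ => hrev ψ (Or.inl hψ))
end
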